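/- arXiv:2312.13464 — 2 statements merged into one kernel-verified Lean document; each statement's English description precedes it below -/
import Mathlib

section
/- For every matroid M on a nonempty finite ground set E, the independent-sets quantum automorphism group and the bases quantum automorphism group coincide: I(QAut_ℐ(M)) = I(QAut_ℬ(M)) as two-sided ideals of 𝔖⁺(E), hence QAut_ℐ(M) = QAut_ℬ(M). -/
/-!
STATEMENT 4: For every matroid M on a nonempty finite ground set E,
I(QAut_ℐ(M)) = I(QAut_ℬ(M)), hence QAut_ℐ(M) = QAut_ℬ(M).

We model a matroid on the nonempty finite ground set E as a Mathlib `Matroid E` whose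
ground set is all of `E`, and the defining ideal of a quantum automorphism group of M
(an ideal of 𝔖⁺(E)) by its preimage `qIdeal E 𝒜` in ℂ⟨E²⟩: the two-sided ideal generated
by the relations of 𝔖⁺(E) together with the elements u_{AB} with exactly one of A, B
in 𝒜.  An independent tuple is a repetition-free tuple whose underlying set is
independent, and a basis tuple is a repetition-free tuple whose underlying set is a
basis (equivalently, an independent tuple of length rank(M)).
-/

noncomputable section

/-- The generator `u_{ij}` of `ℂ⟨E²⟩`. -/
def u (E : Type) (i j : E) : FreeAlgebra ℂ (E × E) :=
  FreeAlgebra.ι ℂ (i, j)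

/-- The defining relations of the quantum symmetric group `𝔖⁺(E)`. -/
def symRels (E : Type) [Fintype E] : Set (FreeAlgebra ℂ (E × E)) :=
  {x | ∃ i j : E, x = u E i j * u E i j - u E i j} ∪
  {x | ∃ i k l : E, k ≠ l ∧ x = u E i k * u E i l} ∪
  {x | ∃ j k l : E, k ≠ l ∧ x = u E k j * u E l j} ∪
  {x | ∃ j : E, x = (∑ k : E, u E k j) - 1} ∪
  {x | ∃ i : E, x = (∑ k : E, u E i k) - 1}

/-- For tuples `A B : Fin k → E`, the (ordered, noncommutative) product
`u_{AB} = u_{a₁b₁} ⋯ u_{a_k b_k}`. -/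
def uProd (E : Type) {k : ℕ} (A B : Fin k → E) : FreeAlgebra ℂ (E × E) :=
  (List.ofFn fun t => u E (A t) (B t)).prod

/-- Tuples of elements of `E` (of arbitrary length). -/
abbrev Tup (E : Type) := Σ k : ℕ, Fin k → E

/-- The elements `u_{AB}` where exactly one of the tuples `A`, `B` lies in `𝒜`. -/
def tupleGens (E : Type) (𝒜 : Set (Tup E)) : Set (FreeAlgebra ℂ (E × E)) :=
  {x | ∃ (k : ℕ) (A B : Fin k → E),
    Xor' (⟨k, A⟩ ∈ 𝒜) (⟨k, B⟩ ∈ 𝒜) ∧ x = uProd E A B}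

/-- The preimage in `ℂ⟨E²⟩` of the ideal `I_𝒜` of `𝔖⁺(E)`; for `𝒜` the set of
independent (resp. basis) tuples of a matroid this is the defining ideal of
`QAut_ℐ(M)` (resp. `QAut_ℬ(M)`). -/
def qIdeal (E : Type) [Fintype E] (𝒜 : Set (Tup E)) :
    TwoSidedIdeal (FreeAlgebra ℂ (E × E)) :=
  TwoSidedIdeal.span (symRels E ∪ tupleGens E 𝒜)

/-- Independent tuples of a matroid: repetition-free tuples whose underlying set
is independent. -/
def indepTuples {E : Type} (M : Matroid E) : Set (Tup E) :=
  {T | Function.Injective T.2 ∧ M.Indep (Set.range T.2)}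

/-- Basis tuples of a matroid: repetition-free tuples whose underlying set is a
basis. -/
def baseTuples {E : Type} (M : Matroid E) : Set (Tup E) :=
  {T | Function.Injective T.2 ∧ M.IsBase (Set.range T.2)}

/-!
If `A` is a basis tuple and `B` is not, then `B` is not even independent, because an
independent tuple as long as a basis is a basis; so the generators of `I(QAut_ℬ(M))` are
generators of `I(QAut_ℐ(M))`. Conversely, let `A` be independent and `B` not, and extend `A`
by a tuple `D` to a basis tuple `AD`. The row relations `∑_c u_{dc} = 1` give
`u_{AB} ≡ ∑_C u_{AB} u_{DC} = ∑_C u_{AD,BC}`, and each `BC` is dependent, so every summand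
is a generator of `I(QAut_ℬ(M))`. When `B` is independent and `A` is not, the column relations
play the same role.
-/

theorem TwoSidedIdeal.mem_of_forall_mul_prod_ofFn_mem {R ι : Type*} [Ring R] [Fintype ι]
    (I : TwoSidedIdeal R) (v : ι → ι → R) (hv : ∀ d, ∑ c, v d c - 1 ∈ I) {m : ℕ}
    (D : Fin m → ι) {a : R}
    (h : ∀ C : Fin m → ι, a * (List.ofFn fun t => v (D t) (C t)).prod ∈ I) : a ∈ I := by
  induction m generalizing a with
  | zero => simpa using h Fin.elim0
  | succ m ih =>
    have hrow (c : ι) : a * v (D 0) c ∈ I :=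
      ih (Fin.tail D) fun C => by simpa [List.ofFn_succ, mul_assoc, Fin.tail] using h (Fin.cons c C)
    have hsplit : a = ∑ c, a * v (D 0) c - a * (∑ c, v (D 0) c - 1) := by
      rw [mul_sub, Finset.mul_sum, mul_one, sub_sub_cancel]
    rw [hsplit]
    exact I.sub_mem (sum_mem fun c _ => hrow c) (I.mul_mem_left a _ (hv _))

theorem Fin.range_append {α : Type*} {k m : ℕ} (A : Fin k → α) (D : Fin m → α) :
    Set.range (Fin.append A D) = Set.range A ∪ Set.range D := by
  ext x
  constructor
  · rintro ⟨i, rfl⟩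
    cases i using Fin.addCases <;> simp
  · rintro (⟨i, rfl⟩ | ⟨i, rfl⟩)
    · exact ⟨Fin.castAdd m i, Fin.append_left A D i⟩
    · exact ⟨Fin.natAdd k i, Fin.append_right A D i⟩

variable {E : Type}

lemma uProd_append {k m : ℕ} (A B : Fin k → E) (D C : Fin m → E) :
    uProd E (Fin.append A D) (Fin.append B C) = uProd E A B * uProd E D C := by
  rw [uProd, uProd, uProd, ← List.prod_append, ← List.ofFn_fin_append]
  congr 2
  funext t
  refine Fin.addCases (fun i => ?_) (fun i => ?_) t <;> simp

section qIdeal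

variable [Fintype E] {𝒜 ℬ : Set (Tup E)}

lemma symRels_subset_qIdeal (𝒜 : Set (Tup E)) : symRels E ⊆ qIdeal E 𝒜 :=
  fun _ hx => TwoSidedIdeal.subset_span (Or.inl hx)

lemma tupleGens_subset_qIdeal (𝒜 : Set (Tup E)) : tupleGens E 𝒜 ⊆ qIdeal E 𝒜 :=
  fun _ hx => TwoSidedIdeal.subset_span (Or.inr hx)

lemma qIdeal_le_qIdeal (h : tupleGens E 𝒜 ⊆ qIdeal E ℬ) : qIdeal E 𝒜 ≤ qIdeal E ℬ :=
  TwoSidedIdeal.span_le.2 (Set.union_subset (symRels_subset_qIdeal ℬ) h)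

lemma uProd_mem_qIdeal {k : ℕ} {A B : Fin k → E}
    (h : Xor' (⟨k, A⟩ ∈ 𝒜) (⟨k, B⟩ ∈ 𝒜)) : uProd E A B ∈ qIdeal E 𝒜 :=
  tupleGens_subset_qIdeal 𝒜 ⟨k, A, B, h, rfl⟩

lemma uProd_mem_qIdeal_of_forall_append_right {k m : ℕ} {A B : Fin k → E} (D : Fin m → E)
    (h : ∀ C : Fin m → E, uProd E (Fin.append A D) (Fin.append B C) ∈ qIdeal E 𝒜) :
    uProd E A B ∈ qIdeal E 𝒜 :=
  (qIdeal E 𝒜).mem_of_forall_mul_prod_ofFn_mem (u E)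
    (fun d => symRels_subset_qIdeal 𝒜 (Or.inr ⟨d, rfl⟩)) D
    fun C => uProd_append A B D C ▸ h C

lemma uProd_mem_qIdeal_of_forall_append_left {k m : ℕ} {A B : Fin k → E} (D : Fin m → E)
    (h : ∀ C : Fin m → E, uProd E (Fin.append A C) (Fin.append B D) ∈ qIdeal E 𝒜) :
    uProd E A B ∈ qIdeal E 𝒜 :=
  (qIdeal E 𝒜).mem_of_forall_mul_prod_ofFn_mem (flip (u E))
    (fun d => symRels_subset_qIdeal 𝒜 (Or.inl (Or.inr ⟨d, rfl⟩))) D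
    fun C => uProd_append A B C D ▸ h C

end qIdeal

section Matroid

variable (M : Matroid E)

lemma baseTuples_subset_indepTuples : baseTuples M ⊆ indepTuples M :=
  fun _ h => ⟨h.1, h.2.indep⟩

variable {M}

lemma mem_indepTuples_of_append_mem {k m : ℕ} {B : Fin k → E} {C : Fin m → E}
    (h : ⟨k + m, Fin.append B C⟩ ∈ indepTuples M) : ⟨k, B⟩ ∈ indepTuples M :=
  ⟨(Fin.append_injective_iff.1 h.1).1,
    h.2.subset (Fin.range_append B C ▸ Set.subset_union_left)⟩

lemma mem_baseTuples_of_mem_indepTuples {k : ℕ} {A B : Fin k → E}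
    (hA : ⟨k, A⟩ ∈ baseTuples M) (hB : ⟨k, B⟩ ∈ indepTuples M) :
    ⟨k, B⟩ ∈ baseTuples M := by
  have hcard : (Set.range A).encard = (Set.range B).encard := by
    rw [← Set.image_univ, ← Set.image_univ, hA.1.encard_image, hB.1.encard_image]
  refine ⟨hB.1, hB.2.isBase_of_eRk_ge (Set.finite_range B) ?_⟩
  rw [hB.2.eRk_eq_encard, ← hcard, hA.2.encard_eq_eRank]

lemma exists_append_mem_baseTuples [Finite E] {k : ℕ} {A : Fin k → E}
    (hA : ⟨k, A⟩ ∈ indepTuples M) :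
    ∃ (m : ℕ) (D : Fin m → E), ⟨k + m, Fin.append A D⟩ ∈ baseTuples M := by
  obtain ⟨S, hS, hAS⟩ := hA.2.exists_isBase_superset
  let D : Fin _ → E := fun i => ((Finite.equivFin ↥(S \ Set.range A)).symm i : E)
  have hD : Set.range D = S \ Set.range A := by
    rw [show D = Subtype.val ∘ (Finite.equivFin _).symm from rfl, Set.range_comp,
      Equiv.range_eq_univ, Set.image_univ, Subtype.range_coe]
  refine ⟨_, D, Fin.append_injective_iff.2 ⟨hA.1, ?_, ?_⟩, ?_⟩
  · exact Subtype.val_injective.comp (Finite.equivFin _).symm.injective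
  · exact fun i j hij => (hD ▸ Set.mem_range_self j).2 (hij ▸ Set.mem_range_self i)
  · rwa [Fin.range_append, hD, Set.union_sdiff_cancel hAS]

variable (M)

lemma tupleGens_baseTuples_subset_tupleGens_indepTuples :
    tupleGens E (baseTuples M) ⊆ tupleGens E (indepTuples M) := by
  rintro _ ⟨k, A, B, hAB, rfl⟩
  refine ⟨k, A, B, ?_, rfl⟩
  rcases hAB with ⟨hA, hB⟩ | ⟨hB, hA⟩
  · exact Or.inl ⟨baseTuples_subset_indepTuples M hA,
      fun h => hB (mem_baseTuples_of_mem_indepTuples hA h)⟩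
  · exact Or.inr ⟨baseTuples_subset_indepTuples M hB,
      fun h => hA (mem_baseTuples_of_mem_indepTuples hB h)⟩

lemma tupleGens_indepTuples_subset_qIdeal_baseTuples [Fintype E] :
    tupleGens E (indepTuples M) ⊆ qIdeal E (baseTuples M) := by
  have not_base {k m} {B : Fin k → E} {C : Fin m → E} (hB : ⟨k, B⟩ ∉ indepTuples M) :
      ⟨k + m, Fin.append B C⟩ ∉ baseTuples M :=
    fun h => hB (mem_indepTuples_of_append_mem (baseTuples_subset_indepTuples M h))
  rintro _ ⟨k, A, B, hAB | hBA, rfl⟩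
  · obtain ⟨m, D, hAD⟩ := exists_append_mem_baseTuples hAB.1
    exact uProd_mem_qIdeal_of_forall_append_right D fun C =>
      uProd_mem_qIdeal (Or.inl ⟨hAD, not_base hAB.2⟩)
  · obtain ⟨m, D, hBD⟩ := exists_append_mem_baseTuples hBA.1
    exact uProd_mem_qIdeal_of_forall_append_left D fun C =>
      uProd_mem_qIdeal (Or.inr ⟨hBD, not_base hBA.2⟩)

end Matroid

theorem qIdeal_indep_eq_qIdeal_base_general (E : Type) [Fintype E]
    (M : Matroid E) :
    qIdeal E (indepTuples M) = qIdeal E (baseTuples M) :=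
  le_antisymm (qIdeal_le_qIdeal (tupleGens_indepTuples_subset_qIdeal_baseTuples M))
    (qIdeal_le_qIdeal ((tupleGens_baseTuples_subset_tupleGens_indepTuples M).trans
      (tupleGens_subset_qIdeal _)))

/-- For every matroid `M` on a nonempty finite ground set `E`,
`I(QAut_ℐ(M)) = I(QAut_ℬ(M))`, hence `QAut_ℐ(M) = QAut_ℬ(M)`. -/
theorem qIdeal_indep_eq_qIdeal_base (E : Type) [Fintype E] [Nonempty E]
    (M : Matroid E) (hM : M.E = Set.univ) :
    qIdeal E (indepTuples M) = qIdeal E (baseTuples M) :=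
  qIdeal_indep_eq_qIdeal_base_general E M

end
end

section
/- Two matroids M₁ and M₂ on nonempty finite ground sets are isomorphic if and only if |Hom(M₁, L)| = |Hom(M₂, L)| for every matroid L on a nonempty finite ground set. -/
/-!
Precomposing with an isomorphism identifies the strong maps out of isomorphic matroids.

Conversely, a strong map into `L` whose image (away from the loop) lies in `T ⊆ E(L)` is the
same as a strong map into the restriction `L|T`, so the hom-counts determine, for every `T`, the
sums over `S ⊆ T` of the numbers of strong maps with image exactly `S`; inverting these sums
over the Boolean lattice shows that `M₁` and `M₂` have equally many strong maps into `L` with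
any prescribed image. Applied to `L = M₂` and `L = M₁` with full image, the identity maps
produce surjective strong maps `M₁ → M₂` and `M₂ → M₁`. Both are then bijections, and pulling
flats back along them embeds the flats of each matroid into those of the other, so each
pull-back is a bijection of flats and the first map is an isomorphism.
-/

/-- Matroid isomorphism (for matroids whose ground set is the whole type). -/
def MatroidIso {α β : Type} (M : Matroid α) (N : Matroid β) : Prop :=
  ∃ e : α ≃ β, ∀ B : Set α, M.IsBase B ↔ N.IsBase (e '' B)

/-- A strong map `M → N`: a function `φ` on the ground sets with the loop `e = none`
adjoined, fixing `e`, such that the preimage of every flat of `N∘` is a flat of `M∘`. -/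
def IsStrongMap {α β : Type} (M : Matroid α) (N : Matroid β)
    (φ : Option α → Option β) : Prop :=
  φ none = none ∧
  ∀ F : Set β, N.IsFlat F →
    M.IsFlat {x : α | φ (some x) ∈ insert none (Option.some '' F)}

open Set Matroid

theorem Set.eq_of_forall_sum_subset_eq {ι M : Type*} [AddCancelCommMonoid M]
    {g₁ g₂ : Set ι → M} [Fintype (Set ι)] [DecidableRel ((· ⊆ ·) : Set ι → Set ι → Prop)]
    (h : ∀ T, ∑ S with S ⊆ T, g₁ S = ∑ S with S ⊆ T, g₂ S) (T : Set ι) : g₁ T = g₂ T := by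
  induction T using WellFoundedLT.induction with | _ T ih => ?_
  have hT : T ∈ ({S | S ⊆ T} : Finset (Set ι)) := by simp
  have hrest : ∑ S ∈ ({S | S ⊆ T} : Finset (Set ι)).erase T, g₁ S =
      ∑ S ∈ ({S | S ⊆ T} : Finset (Set ι)).erase T, g₂ S := by
    refine Finset.sum_congr rfl fun S hS ↦ ih S ?_
    simp only [Finset.mem_erase, Finset.mem_filter, Finset.mem_univ, true_and] at hS
    exact hS.2.ssubset_of_ne hS.1
  have := h T
  rw [← Finset.add_sum_erase _ _ hT, ← Finset.add_sum_erase _ _ hT, hrest] at this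
  exact add_right_cancel this

theorem Nat.card_subtype_and_mem_eq_sum {X Y : Type*} [Finite X] [DecidableEq Y]
    (f : X → Y) (p : X → Prop) (s : Finset Y) :
    Nat.card {x // p x ∧ f x ∈ s} = ∑ y ∈ s, Nat.card {x // p x ∧ f x = y} := by
  classical
  have := Fintype.ofFinite X
  simp only [Nat.card_eq_fintype_card, Fintype.card_subtype]
  rw [Finset.card_eq_sum_card_fiberwise (f := f) (t := s) (fun x hx ↦ by simp_all)]
  refine Finset.sum_congr rfl fun y hy ↦ congrArg Finset.card ?_
  ext x
  simp only [Finset.mem_filter, Finset.mem_univ, true_and]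
  constructor
  · exact fun h ↦ ⟨h.1.1, h.2⟩
  · rintro ⟨hp, rfl⟩; exact ⟨⟨hp, hy⟩, rfl⟩

lemma Option.map_mem_insert_none_image_some_iff {α β : Type*} (f : α → β) (F : Set β)
    (o : Option α) : o.map f ∈ insert none (some '' F) ↔ o ∈ insert none (some '' (f ⁻¹' F)) := by
  cases o <;> simp

lemma Equiv.exists_optionMap_eq_of_bijective {α β : Type*} {φ : Option α → Option β}
    (hφ : φ.Bijective) (h0 : φ none = none) : ∃ e : α ≃ β, Option.map e = φ := by
  refine ⟨(Equiv.ofBijective φ hφ).removeNone, funext fun o ↦ ?_⟩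
  cases o with
  | none => exact h0.symm
  | some x =>
    refine Equiv.removeNone_some _ (Option.ne_none_iff_exists'.1 fun hx ↦ ?_)
    exact Option.some_ne_none x (hφ.1 (hx.trans h0.symm))

namespace Matroid

variable {α β : Type*}

lemma ext_isFlat {M N : Matroid α} (h : ∀ F, M.IsFlat F ↔ N.IsFlat F) : M = N := by
  have hE : M.E = N.E := (((h _).1 M.ground_isFlat).subset_ground).antisymm
    (((h _).2 N.ground_isFlat).subset_ground)
  refine ext_closure fun X ↦ ?_
  simp only [closure_def, hE, h]

lemma mapEquiv_isFlat_iff (M : Matroid α) (e : α ≃ β) {F : Set β} :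
    (M.mapEquiv e).IsFlat F ↔ M.IsFlat (e ⁻¹' F) := by
  rw [isFlat_iff_closure_eq, isFlat_iff_closure_eq, mapEquiv_eq_map, map_closure_eq,
    ← e.image_symm_eq_preimage, ← e.image_eq_iff_eq, e.image_symm_image]

lemma restrictSubtype_closure_eq {L : Matroid α} (hL : L.E = univ) (T : Set α) (X : Set T) :
    (L.restrictSubtype T).closure X = Subtype.val ⁻¹' L.closure (Subtype.val '' X) := by
  rw [restrictSubtype, comap_closure_eq, restrict_closure_eq _ (Subtype.coe_image_subset T X)
    (hL ▸ subset_univ T), preimage_inter, Subtype.coe_preimage_self, inter_univ]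

lemma isFlat_restrictSubtype_iff {L : Matroid α} (hL : L.E = univ) {T : Set α} {F' : Set T} :
    (L.restrictSubtype T).IsFlat F' ↔ ∃ F, L.IsFlat F ∧ Subtype.val ⁻¹' F = F' := by
  rw [isFlat_iff_closure_eq, restrictSubtype_closure_eq hL]
  refine ⟨fun h ↦ ⟨_, L.isFlat_closure _, h⟩, ?_⟩
  rintro ⟨F, hF, rfl⟩
  refine (preimage_mono ?_).antisymm fun x hx ↦ L.subset_closure _ (by simp [hL]) ⟨x, hx, rfl⟩
  exact (L.closure_subset_closure (image_preimage_subset _ _)).trans hF.closure.subset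

variable {M : Matroid α} {N : Matroid β}

lemma injective_isFlat_preimage (e : α ≃ β) (h : ∀ F, N.IsFlat F → M.IsFlat (e ⁻¹' F)) :
    Function.Injective fun F : {F // N.IsFlat F} ↦ (⟨e ⁻¹' F, h F.1 F.2⟩ : {G // M.IsFlat G}) :=
  fun _ _ hF ↦ Subtype.ext (e.surjective.preimage_injective (congrArg Subtype.val hF))

lemma card_isFlat_le_of_isFlat_preimage [Finite α] (e : α ≃ β)
    (h : ∀ F, N.IsFlat F → M.IsFlat (e ⁻¹' F)) :
    Nat.card {F // N.IsFlat F} ≤ Nat.card {G // M.IsFlat G} :=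
  Nat.card_le_card_of_injective _ (injective_isFlat_preimage e h)

lemma isFlat_iff_isFlat_preimage_of_card_le [Finite α] (e : α ≃ β)
    (h : ∀ F, N.IsFlat F → M.IsFlat (e ⁻¹' F))
    (hcard : Nat.card {G // M.IsFlat G} ≤ Nat.card {F // N.IsFlat F}) (F : Set β) :
    N.IsFlat F ↔ M.IsFlat (e ⁻¹' F) := by
  refine ⟨h F, fun hF ↦ ?_⟩
  obtain ⟨⟨F', hF'⟩, hFF'⟩ :=
    ((injective_isFlat_preimage e h).bijective_of_nat_card_le hcard).2 ⟨_, hF⟩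
  rwa [← e.surjective.preimage_injective (congrArg Subtype.val hFF')]

end Matroid

variable {α β γ : Type}

lemma matroidIso_iff_exists_isFlat_iff {M : Matroid α} {N : Matroid β} (hM : M.E = univ)
    (hN : N.E = univ) : MatroidIso M N ↔ ∃ e : α ≃ β, ∀ F, N.IsFlat F ↔ M.IsFlat (e ⁻¹' F) := by
  simp_rw [← M.mapEquiv_isFlat_iff]
  constructor
  · rintro ⟨e, he⟩
    refine ⟨e, fun F ↦ Iff.of_eq (congrArg (·.IsFlat F) (ext_isBase ?_ fun B _ ↦ ?_))⟩
    · rw [hN, mapEquiv_ground_eq, hM, image_univ, e.range_eq_univ]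
    · rw [mapEquiv_isBase_iff, he, e.image_symm_image]
  · rintro ⟨e, he⟩
    refine ⟨e, fun B ↦ ?_⟩
    rw [ext_isFlat he, mapEquiv_isBase_iff, e.symm_image_image]

lemma IsStrongMap.comp {M : Matroid α} {N : Matroid β} {L : Matroid γ}
    {ψ : Option β → Option γ} {φ : Option α → Option β}
    (hψ : IsStrongMap N L ψ) (hφ : IsStrongMap M N φ) : IsStrongMap M L (ψ ∘ φ) := by
  refine ⟨by simp [hψ.1, hφ.1], fun F hF ↦ ?_⟩
  convert hφ.2 _ (hψ.2 F hF) using 1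
  ext x
  cases h : φ (some x) <;> simp [h, hψ.1]

lemma isStrongMap_id (M : Matroid α) : IsStrongMap M M id :=
  ⟨rfl, fun F hF ↦ by simpa using hF⟩

lemma isStrongMap_optionMap_iff {M : Matroid α} {N : Matroid β} (f : α → β) :
    IsStrongMap M N (Option.map f) ↔ ∀ F, N.IsFlat F → M.IsFlat (f ⁻¹' F) := by
  simp [IsStrongMap, preimage]

lemma card_strongMap_eq_of_isFlat_iff {M₁ : Matroid α} {M₂ : Matroid β} (e : α ≃ β)
    (he : ∀ F, M₂.IsFlat F ↔ M₁.IsFlat (e ⁻¹' F)) (L : Matroid γ) :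
    Nat.card {φ : Option α → Option γ // IsStrongMap M₁ L φ} =
      Nat.card {φ : Option β → Option γ // IsStrongMap M₂ L φ} := by
  have h₁ : IsStrongMap M₁ M₂ (Option.map e) :=
    (isStrongMap_optionMap_iff e).2 fun F ↦ (he F).1
  have h₂ : IsStrongMap M₂ M₁ (Option.map e.symm) :=
    (isStrongMap_optionMap_iff e.symm).2 fun G hG ↦ (he _).2 (by simpa [← preimage_comp] using hG)
  refine Nat.card_congr (Equiv.subtypeEquiv (e.optionCongr.arrowCongr (Equiv.refl _)) fun φ ↦
    ⟨fun hφ ↦ hφ.comp h₂, fun hφ ↦ ?_⟩)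
  convert hφ.comp h₁
  ext1 o
  exact congrArg φ (e.optionCongr.symm_apply_apply o).symm

def groundRange (φ : Option α → Option γ) : Set γ := some ⁻¹' range φ

lemma groundRange_id : groundRange (id : Option α → Option α) = univ := by
  simp [groundRange]

lemma surjective_of_groundRange_eq_univ {φ : Option α → Option γ} (h0 : φ none = none)
    (h : groundRange φ = univ) : Function.Surjective φ
  | none => ⟨none, h0⟩
  | some y => (h ▸ mem_univ y : y ∈ groundRange φ)

lemma exists_optionMap_val_comp_eq {φ : Option α → Option γ} {T : Set γ}
    (h : groundRange φ ⊆ T) : ∃ ψ : Option α → Option T, Option.map Subtype.val ∘ ψ = φ := by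
  have : ∀ a, ∃ o : Option T, o.map Subtype.val = φ a := fun a ↦ by
    cases ha : φ a with
    | none => exact ⟨none, rfl⟩
    | some y => exact ⟨some ⟨y, h ⟨a, ha⟩⟩, rfl⟩
  choose ψ hψ using this
  exact ⟨ψ, funext hψ⟩

lemma isStrongMap_restrictSubtype_iff {M : Matroid α} {L : Matroid γ} (hL : L.E = univ)
    {T : Set γ} {ψ : Option α → Option T} :
    IsStrongMap M (L.restrictSubtype T) ψ ↔ IsStrongMap M L (Option.map Subtype.val ∘ ψ) := by
  simp only [IsStrongMap, isFlat_restrictSubtype_iff hL, Function.comp_apply,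
    Option.map_mem_insert_none_image_some_iff, Option.map_eq_none_iff, forall_exists_index,
    and_imp, forall_apply_eq_imp_iff₂]

lemma card_strongMap_restrictSubtype (M : Matroid α) {L : Matroid γ} (hL : L.E = univ)
    (T : Set γ) :
    Nat.card {ψ : Option α → Option T // IsStrongMap M (L.restrictSubtype T) ψ} =
      Nat.card {φ : Option α → Option γ // IsStrongMap M L φ ∧ groundRange φ ⊆ T} := by
  refine Nat.card_eq_of_bijective (fun ψ ↦ ⟨_, (isStrongMap_restrictSubtype_iff hL).1 ψ.2, ?_⟩)
    ⟨fun ψ₁ ψ₂ h ↦ ?_, fun φ ↦ ?_⟩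
  · rintro y ⟨a, ha⟩
    obtain ⟨t, -, rfl⟩ := Option.map_eq_some_iff.1 ha
    exact t.2
  · exact Subtype.ext (funext fun a ↦
      Option.map_injective Subtype.val_injective (congrFun (congrArg Subtype.val h) a))
  · obtain ⟨φ, hφ, hφT⟩ := φ
    obtain ⟨ψ, rfl⟩ := exists_optionMap_val_comp_eq hφT
    exact ⟨⟨ψ, (isStrongMap_restrictSubtype_iff hL).2 hφ⟩, rfl⟩

lemma card_strongMap_groundRange_subset_empty {M : Matroid α} (hM : M.E = univ)
    (L : Matroid γ) :
    Nat.card {φ : Option α → Option γ // IsStrongMap M L φ ∧ groundRange φ ⊆ ∅} = 1 := by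
  refine Nat.card_eq_one_iff_exists.2
    ⟨⟨fun _ ↦ none, ⟨rfl, fun F _ ↦ ?_⟩, by simp [groundRange, eq_empty_iff_forall_notMem]⟩,
      fun ⟨φ, _, hφ⟩ ↦ ?_⟩
  · simpa [hM] using M.ground_isFlat
  · exact Subtype.ext (funext fun a ↦ Option.eq_none_iff_forall_ne_some.2 fun y hy ↦ hφ ⟨a, hy⟩)

open Classical in
lemma card_strongMap_groundRange_subset_eq_sum [Finite α] [Fintype γ] (M : Matroid α)
    (L : Matroid γ) (T : Set γ) :
    Nat.card {φ : Option α → Option γ // IsStrongMap M L φ ∧ groundRange φ ⊆ T} =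
      ∑ S with S ⊆ T,
        Nat.card {φ : Option α → Option γ // IsStrongMap M L φ ∧ groundRange φ = S} := by
  simpa using Nat.card_subtype_and_mem_eq_sum groundRange (IsStrongMap M L) {S | S ⊆ T}

lemma card_strongMap_groundRange_eq [Finite α] [Finite β] [Fintype γ] {M₁ : Matroid α}
    {M₂ : Matroid β} (h₁ : M₁.E = univ) (h₂ : M₂.E = univ)
    (H : ∀ (γ : Type) [Fintype γ] [Nonempty γ] (L : Matroid γ), L.E = univ →
      Nat.card {φ : Option α → Option γ // IsStrongMap M₁ L φ} =
        Nat.card {φ : Option β → Option γ // IsStrongMap M₂ L φ})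
    {L : Matroid γ} (hL : L.E = univ) (T : Set γ) :
    Nat.card {φ : Option α → Option γ // IsStrongMap M₁ L φ ∧ groundRange φ = T} =
      Nat.card {φ : Option β → Option γ // IsStrongMap M₂ L φ ∧ groundRange φ = T} := by
  classical
  revert T
  apply Set.eq_of_forall_sum_subset_eq
  intro T
  rw [← card_strongMap_groundRange_subset_eq_sum, ← card_strongMap_groundRange_subset_eq_sum]
  obtain rfl | hT := T.eq_empty_or_nonempty
  · rw [card_strongMap_groundRange_subset_empty h₁, card_strongMap_groundRange_subset_empty h₂]
  · have := hT.to_subtype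
    rw [← card_strongMap_restrictSubtype _ hL, ← card_strongMap_restrictSubtype _ hL]
    exact H T _ restrictSubtype_ground

lemma exists_strongMap_groundRange_eq_univ [Finite α] [Fintype β] {M₁ : Matroid α}
    {M₂ : Matroid β} (h₁ : M₁.E = univ) (h₂ : M₂.E = univ)
    (H : ∀ (γ : Type) [Fintype γ] [Nonempty γ] (L : Matroid γ), L.E = univ →
      Nat.card {φ : Option α → Option γ // IsStrongMap M₁ L φ} =
        Nat.card {φ : Option β → Option γ // IsStrongMap M₂ L φ}) :
    ∃ φ : Option α → Option β, IsStrongMap M₁ M₂ φ ∧ groundRange φ = univ := by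
  have hpos :
      0 < Nat.card {φ : Option β → Option β // IsStrongMap M₂ M₂ φ ∧ groundRange φ = univ} :=
    Nat.card_pos_iff.2 ⟨⟨id, isStrongMap_id M₂, groundRange_id⟩, inferInstance⟩
  rw [← card_strongMap_groundRange_eq h₁ h₂ H h₂] at hpos
  obtain ⟨⟨φ, hφ⟩⟩ := (Nat.card_pos_iff.1 hpos).1
  exact ⟨φ, hφ⟩

lemma matroidIso_of_groundRange_eq_univ [Finite α] [Finite β] {M : Matroid α} {N : Matroid β}
    (hM : M.E = univ) (hN : N.E = univ) {φ : Option α → Option β} {ψ : Option β → Option α}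
    (hφ : IsStrongMap M N φ) (hψ : IsStrongMap N M ψ) (hφr : groundRange φ = univ)
    (hψr : groundRange ψ = univ) : MatroidIso M N := by
  have hφs := surjective_of_groundRange_eq_univ hφ.1 hφr
  have hψs := surjective_of_groundRange_eq_univ hψ.1 hψr
  obtain ⟨e, rfl⟩ := Equiv.exists_optionMap_eq_of_bijective
    (hφs.bijective_of_nat_card_le (Nat.card_le_card_of_surjective ψ hψs)) hφ.1
  obtain ⟨d, rfl⟩ := Equiv.exists_optionMap_eq_of_bijective
    (hψs.bijective_of_nat_card_le (Nat.card_le_card_of_surjective _ hφs)) hψ.1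
  rw [isStrongMap_optionMap_iff] at hφ hψ
  exact (matroidIso_iff_exists_isFlat_iff hM hN).2
    ⟨e, isFlat_iff_isFlat_preimage_of_card_le e hφ (card_isFlat_le_of_isFlat_preimage d hψ)⟩

theorem matroidIso_iff_card_hom_eq_general {α β : Type}
    [Fintype α] [Fintype β]
    (M₁ : Matroid α) (M₂ : Matroid β) (h₁ : M₁.E = Set.univ) (h₂ : M₂.E = Set.univ) :
    MatroidIso M₁ M₂ ↔
      ∀ (γ : Type) [Fintype γ] [Nonempty γ] (L : Matroid γ), L.E = Set.univ →
        Nat.card {φ : Option α → Option γ // IsStrongMap M₁ L φ} =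
        Nat.card {φ : Option β → Option γ // IsStrongMap M₂ L φ} := by
  refine ⟨fun hiso γ _ _ L _ ↦ ?_, fun H ↦ ?_⟩
  · obtain ⟨e, he⟩ := (matroidIso_iff_exists_isFlat_iff h₁ h₂).1 hiso
    exact card_strongMap_eq_of_isFlat_iff e he L
  · obtain ⟨φ, hφ, hφr⟩ := exists_strongMap_groundRange_eq_univ h₁ h₂ H
    obtain ⟨ψ, hψ, hψr⟩ :=
      exists_strongMap_groundRange_eq_univ h₂ h₁ fun γ _ _ L hL ↦ (H γ L hL).symm
    exact matroidIso_of_groundRange_eq_univ h₁ h₂ hφ hψ hφr hψr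

/-- Two matroids on nonempty finite ground sets are isomorphic iff
they admit the same number of strong maps into every matroid on a nonempty finite
ground set. -/
theorem matroidIso_iff_card_hom_eq {α β : Type}
    [Fintype α] [Nonempty α] [Fintype β] [Nonempty β]
    (M₁ : Matroid α) (M₂ : Matroid β) (h₁ : M₁.E = Set.univ) (h₂ : M₂.E = Set.univ) :
    MatroidIso M₁ M₂ ↔
      ∀ (γ : Type) [Fintype γ] [Nonempty γ] (L : Matroid γ), L.E = Set.univ →
        Nat.card {φ : Option α → Option γ // IsStrongMap M₁ L φ} =
        Nat.card {φ : Option β → Option γ // IsStrongMap M₂ L φ} :=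
  matroidIso_iff_card_hom_eq_general M₁ M₂ h₁ h₂
end
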